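/- Let f : [0,1]^d → ℝ be continuously differentiable, fix i ∈ {1,…,d} and m > 0. Then ∫_{H^d} x_i^m u_i(x) dx = (1/(m+1)) · [ ∫_{H^d} (f(1,z) − f(x)) dx − ∫_{H^d} x_i^{m+1} (∂f/∂x_i)(x) dx ]. -/

import Mathlib

open MeasureTheory Real

noncomputable section

/-- The unit cube `[0,1]^d` in `ℝ^d`. -/
def unitCube (d : ℕ) : Set (Fin d → ℝ) := Set.Icc 0 1

/-- The partial derivative `∂f/∂x_i` at the point `x`. -/
def pderivI {d : ℕ} (f : (Fin d → ℝ) → ℝ) (i : Fin d) (x : Fin d → ℝ) : ℝ :=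
  deriv (fun t : ℝ => f (Function.update x i t)) (x i)

/-- `u_i(x) = f(x) - ∫₀¹ f(x₁,…,x_{i-1},t,x_{i+1},…,x_d) dt`, the sum of all ANOVA
terms of `f` depending on `x_i`. -/
def uComp {d : ℕ} (f : (Fin d → ℝ) → ℝ) (i : Fin d) (x : Fin d → ℝ) : ℝ :=
  f x - ∫ t in (0:ℝ)..1, f (Function.update x i t)

/-- The total variance `D = ∫ f² dx − (∫ f dx)²` over the unit cube. -/
def totVar {d : ℕ} (f : (Fin d → ℝ) → ℝ) : ℝ :=
  (∫ x in unitCube d, (f x) ^ 2) - (∫ x in unitCube d, f x) ^ 2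

/-- The total partial variance `D_i^tot = ∫ u_i² dx`. -/
def DTot {d : ℕ} (f : (Fin d → ℝ) → ℝ) (i : Fin d) : ℝ :=
  ∫ x in unitCube d, (uComp f i x) ^ 2

/-- The total Sobol' sensitivity index `S_i^tot = D_i^tot / D`. -/
def STot {d : ℕ} (f : (Fin d → ℝ) → ℝ) (i : Fin d) : ℝ :=
  DTot f i / totVar f

/-- The DGSM `ν_i = ∫ (∂f/∂x_i)² dx`. -/
def nuDGSM {d : ℕ} (f : (Fin d → ℝ) → ℝ) (i : Fin d) : ℝ :=
  ∫ x in unitCube d, (pderivI f i x) ^ 2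

/-- The DGSM `w_i^{(m)} = ∫ x_i^m (∂f/∂x_i) dx`. -/
def wDGSM {d : ℕ} (f : (Fin d → ℝ) → ℝ) (i : Fin d) (m : ℝ) : ℝ :=
  ∫ x in unitCube d, (x i) ^ m * pderivI f i x

/-- The DGSM `ς_i = (1/2) ∫ x_i (1 - x_i) (∂f/∂x_i)² dx`. -/
def sigmaDGSM {d : ℕ} (f : (Fin d → ℝ) → ℝ) (i : Fin d) : ℝ :=
  (1 / 2) * ∫ x in unitCube d, x i * (1 - x i) * (pderivI f i x) ^ 2

/-!
By Fubini it suffices to prove the identity on every line parallel to the `x_i`-axis, that is,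
for the slice `g t = f (…, t, …)` on `[0,1]`. There integration by parts gives
`∫₀¹ t^(m+1) g' = g 1 - (m+1) ∫₀¹ t^m g`, and `∫₀¹ t^m = 1/(m+1)` accounts for the subtracted
mean `∫₀¹ g`.
-/

theorem setIntegral_Icc_eq_setIntegral_setIntegral_insertNth {E : Type*} [NormedAddCommGroup E]
    [NormedSpace ℝ E] {n : ℕ} (i : Fin (n + 1)) (a b : Fin (n + 1) → ℝ)
    {Φ : (Fin (n + 1) → ℝ) → E} (hΦ : IntegrableOn Φ (Set.Icc a b)) :
    ∫ x in Set.Icc a b, Φ x =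
      ∫ y in Set.Icc (a ∘ i.succAbove) (b ∘ i.succAbove),
        ∫ t in Set.Icc (a i) (b i), Φ (i.insertNth t y) := by
  set e : ℝ × (Fin n → ℝ) ≃ᵐ (Fin (n + 1) → ℝ) :=
    (MeasurableEquiv.piFinSuccAbove (fun _ => ℝ) i).symm
  have he : MeasurePreserving e :=
    (volume_preserving_piFinSuccAbove (fun _ : Fin (n + 1) => ℝ) i).symm _
  have hpre : e ⁻¹' Set.Icc a b =
      Set.Icc (a i) (b i) ×ˢ Set.Icc (a ∘ i.succAbove) (b ∘ i.succAbove) :=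
    ((Fin.insertNthOrderIso (fun _ => ℝ) i).preimage_Icc _ _).trans (Set.Icc_prod_eq _ _)
  rw [← he.integrableOn_comp_preimage e.measurableEmbedding, hpre, Measure.volume_eq_prod,
    IntegrableOn, ← Measure.prod_restrict] at hΦ
  rw [← he.map_eq, setIntegral_map_equiv, hpre, Measure.volume_eq_prod, ← setIntegral_prod_swap,
    setIntegral_prod _ (by rw [IntegrableOn, ← Measure.prod_restrict]; exact hΦ.swap)]
  rfl

section OneDimensional

variable {g : ℝ → ℝ} {m : ℝ}

theorem integral_rpow_mul_deriv (hg : ContDiff ℝ 1 g) (hm : 0 ≤ m) :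
    ∫ t in (0 : ℝ)..1, t ^ (m + 1) * deriv g t =
      g 1 - (m + 1) * ∫ t in (0 : ℝ)..1, t ^ m * g t := by
  have hpow : ∀ t : ℝ, HasDerivAt (fun t : ℝ => t ^ (m + 1)) ((m + 1) * t ^ m) t := fun t => by
    simpa using Real.hasDerivAt_rpow_const (x := t) (p := m + 1) (Or.inr (by linarith))
  rw [intervalIntegral.integral_mul_deriv_eq_deriv_mul (fun t _ => hpow t)
      (fun t _ => (hg.differentiable one_ne_zero t).hasDerivAt)
      ((continuous_const.mul (continuous_rpow_const hm)).intervalIntegrable _ _)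
      ((hg.continuous_deriv le_rfl).intervalIntegrable _ _),
    one_rpow, zero_rpow (by positivity), ← intervalIntegral.integral_const_mul]
  simp only [mul_assoc, one_mul, zero_mul, sub_zero]

theorem integral_rpow_mul_sub_integral (hg : ContDiff ℝ 1 g) (hm : 0 ≤ m) :
    ∫ t in (0 : ℝ)..1, t ^ m * (g t - ∫ s in (0 : ℝ)..1, g s) =
      (1 / (m + 1)) * ∫ t in (0 : ℝ)..1, ((g 1 - g t) - t ^ (m + 1) * deriv g t) := by
  have hpow : Continuous fun t : ℝ => t ^ m := continuous_rpow_const hm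
  have hpow_mul : Continuous fun t => t ^ m * g t := hpow.mul hg.continuous
  have hsub : Continuous fun t => g 1 - g t := continuous_const.sub hg.continuous
  have hpow_mul_deriv : Continuous fun t => t ^ (m + 1) * deriv g t :=
    (continuous_rpow_const (by linarith)).mul (hg.continuous_deriv le_rfl)
  have hmean : ∫ t in (0 : ℝ)..1, t ^ m = 1 / (m + 1) := by
    rw [integral_rpow (Or.inl (by linarith)), one_rpow, zero_rpow (by positivity)]
    ring
  simp only [mul_sub]
  rw [intervalIntegral.integral_sub (hpow_mul.intervalIntegrable _ _)
      ((hpow.intervalIntegrable _ _).mul_const _),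
    intervalIntegral.integral_mul_const, hmean,
    intervalIntegral.integral_sub (hsub.intervalIntegrable _ _)
      (hpow_mul_deriv.intervalIntegrable _ _),
    intervalIntegral.integral_sub intervalIntegrable_const (hg.continuous.intervalIntegrable _ _),
    integral_rpow_mul_deriv hg hm, intervalIntegral.integral_const]
  field_simp
  ring

end OneDimensional

theorem ContDiff.comp_insertNth {F : Type*} [NormedAddCommGroup F] [NormedSpace ℝ F] {n : ℕ}
    {k : WithTop ℕ∞} {f : (Fin (n + 1) → ℝ) → F} (hf : ContDiff ℝ k f) (i : Fin (n + 1))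
    (y : Fin n → ℝ) : ContDiff ℝ k fun t => f (i.insertNth t y) := by
  have hline : (fun t => f (i.insertNth t y)) = f ∘ Function.update (i.insertNth 0 y) i := by
    funext t
    simp only [Function.comp_apply, Fin.update_insertNth]
  rw [hline]
  exact hf.comp (contDiff_update k _ i)

section PartialDerivative

variable {d : ℕ} {f : (Fin d → ℝ) → ℝ}

theorem pderivI_eq_fderiv {x : Fin d → ℝ} (hf : DifferentiableAt ℝ f x) (i : Fin d) :
    pderivI f i x = fderiv ℝ f x (Pi.single i 1) := by
  have hfx : HasFDerivAt f (fderiv ℝ f x) (Function.update x i (x i)) := by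
    rw [Function.update_eq_self]
    exact hf.hasFDerivAt
  exact (hfx.comp_hasDerivAt (x i) (hasDerivAt_update x i (x i))).deriv

theorem continuous_pderivI (hf : ContDiff ℝ 1 f) (i : Fin d) : Continuous (pderivI f i) := by
  rw [funext fun x => pderivI_eq_fderiv (hf.differentiable one_ne_zero x) i]
  exact (hf.continuous_fderiv one_ne_zero).clm_apply continuous_const

theorem continuous_uComp (hf : Continuous f) (i : Fin d) : Continuous (uComp f i) :=
  hf.sub <| intervalIntegral.continuous_parametric_intervalIntegral_of_continuous'
    (f := fun x t => f (Function.update x i t))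
    (hf.comp (continuous_fst.update i continuous_snd)) 0 1

end PartialDerivative

/-- **Integral identity (18).** For `f` continuously differentiable on the unit cube and
`m > 0`, `∫ x_i^m u_i(x) dx = (1/(m+1))·[∫ (f(1,z) − f(x)) dx − ∫ x_i^{m+1} (∂f/∂x_i) dx]`. -/
theorem integral_pow_mul_u (d : ℕ) (f : (Fin d → ℝ) → ℝ) (hf : ContDiff ℝ 1 f)
    (i : Fin d) (m : ℝ) (hm : 0 < m) :
    ∫ x in unitCube d, (x i) ^ m * uComp f i x =
      (1 / (m + 1)) *
        ((∫ x in unitCube d, (f (Function.update x i 1) - f x)) -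
          ∫ x in unitCube d, (x i) ^ (m + 1) * pderivI f i x) := by
  obtain _ | n := d
  · exact i.elim0
  have hcoord (p : ℝ) (hp : 0 ≤ p) : Continuous fun x : Fin (n + 1) → ℝ => x i ^ p :=
    (continuous_rpow_const hp).comp (continuous_apply i)
  have hlhs : Continuous fun x => x i ^ m * uComp f i x :=
    (hcoord m hm.le).mul (continuous_uComp hf.continuous i)
  have hjump : Continuous fun x => f (Function.update x i 1) - f x :=
    (hf.continuous.comp (continuous_id.update i continuous_const)).sub hf.continuous
  have hpow_pderiv : Continuous fun x => x i ^ (m + 1) * pderivI f i x :=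
    (hcoord (m + 1) (by linarith)).mul (continuous_pderivI hf i)
  have hrhs : Continuous fun x =>
      (f (Function.update x i 1) - f x) - x i ^ (m + 1) * pderivI f i x :=
    hjump.sub hpow_pderiv
  rw [unitCube, ← integral_sub hjump.integrableOn_Icc hpow_pderiv.integrableOn_Icc,
    setIntegral_Icc_eq_setIntegral_setIntegral_insertNth i _ _ hlhs.integrableOn_Icc,
    setIntegral_Icc_eq_setIntegral_setIntegral_insertNth i _ _ hrhs.integrableOn_Icc,
    ← integral_const_mul]
  refine setIntegral_congr_fun measurableSet_Icc fun y _ => ?_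
  simp only [Pi.zero_apply, Pi.one_apply, integral_Icc_eq_integral_Ioc,
    ← intervalIntegral.integral_of_le zero_le_one, uComp, pderivI, Fin.update_insertNth,
    Fin.insertNth_apply_same]
  exact integral_rpow_mul_sub_integral (hf.comp_insertNth i y) hm.le
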